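/- Let I = (G, 𝐓, W, k) be a tuple where G = (V,E) is a finite simple undirected graph, 𝐓 is a finite set of pairs of vertices, W ⊆ V is a vertex multicut of (G,𝐓), and k is an integer. Let Z ⊆ V ∖ W, let f : Z → W be a map, and let I′ = (G′, 𝐓′, W, k) = contract(I, f). Then: (1) if I has no solution, then I′ has no solution; and (2) if X is a solution of I with |X| ≤ k such that X ∩ Z = ∅ and for every v ∈ Z the vertices v and f(v) lie in the same connected component of G − X, then X is also a solution of I′. -/

import Mathlib

open scoped Classical

variable {V : Type*} [Fintype V] [DecidableEq V]

/-- The graph `G − X`: the graph obtained from `G` by deleting the vertices of `X`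
(encoded on the same vertex type: vertices of `X` become isolated). -/
def removeVerts (G : SimpleGraph V) (X : Set V) : SimpleGraph V where
  Adj u v := G.Adj u v ∧ u ∉ X ∧ v ∉ X
  symm := by refine ⟨?_⟩; rintro u v ⟨h, hu, hv⟩; exact ⟨h.symm, hv, hu⟩
  loopless := by refine ⟨?_⟩; rintro v ⟨h, -, -⟩; exact G.irrefl h

/-- The open neighborhood `N(C)` of a vertex set `C`. -/
def nbhd (G : SimpleGraph V) (C : Set V) : Set V :=
  {v | v ∉ C ∧ ∃ u ∈ C, G.Adj u v}

/-- `X` is a vertex multicut of `(G, Pairs)`. -/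
def IsMulticut (G : SimpleGraph V) (Pairs : Set (V × V)) (X : Set V) : Prop :=
  ∀ p ∈ Pairs, ¬ (removeVerts G X).Reachable p.1 p.2

/-- A solution of the Vertex Multicut Compression instance `(G, Pairs, W, k)`. -/
def IsSolution (G : SimpleGraph V) (Pairs : Set (V × V)) (W : Set V) (k : ℕ)
    (X : Set V) : Prop :=
  X.ncard ≤ k ∧ IsMulticut G Pairs X ∧ Disjoint X W ∧
    ∀ w₁ ∈ W, ∀ w₂ ∈ W, w₁ ≠ w₂ → ¬ (removeVerts G X).Reachable w₁ w₂

/-- `f*`: the extension of `f : Z → W` by the identity on `V ∖ Z`. -/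
noncomputable def fStar (Z : Set V) (f : V → V) (v : V) : V :=
  if v ∈ Z then f v else v

/-- The contracted graph: vertex set `V ∖ Z` (vertices of `Z` become isolated), with
edge set `{(f*(u), f*(v)) : (u,v) ∈ E, f*(u) ≠ f*(v)}`. -/
def contractGraph (G : SimpleGraph V) (Z : Set V) (f : V → V) : SimpleGraph V where
  Adj a b := a ≠ b ∧ ∃ u v, G.Adj u v ∧ a = fStar Z f u ∧ b = fStar Z f v
  symm := by
    refine ⟨?_⟩
    rintro a b ⟨hne, u, v, h, ha, hb⟩
    exact ⟨hne.symm, v, u, h.symm, hb, ha⟩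
  loopless := by refine ⟨?_⟩; rintro a ⟨hne, -⟩; exact hne rfl

/-- The terminal pairs of the contracted instance. -/
def contractPairs (Z : Set V) (f : V → V) (Pairs : Set (V × V)) : Set (V × V) :=
  {q | ∃ p ∈ Pairs, q = (fStar Z f p.1, fStar Z f p.2)}

section Aux

variable {G : SimpleGraph V} {Z W X Y : Set V} {f : V → V}

lemma fStar_not_mem_Z (hZ : Disjoint Z W) (hf : ∀ v ∈ Z, f v ∈ W) (u : V) :
    fStar Z f u ∉ Z := by
  unfold fStar; split
  · exact Set.disjoint_right.mp hZ (hf u ‹_›)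
  · assumption

lemma contract_adj_not_mem_Z (hZ : Disjoint Z W) (hf : ∀ v ∈ Z, f v ∈ W)
    {a b : V} (h : (contractGraph G Z f).Adj a b) : a ∉ Z := by
  obtain ⟨-, u, v, -, rfl, -⟩ := h
  exact fStar_not_mem_Z hZ hf u

lemma fStar_not_mem (hYW : Disjoint Y W) (hf : ∀ v ∈ Z, f v ∈ W)
    {u : V} (hu : u ∉ Y) : fStar Z f u ∉ Y := by
  unfold fStar; split
  · exact Set.disjoint_right.mp hYW (hf u ‹_›)
  · assumption

/-- Reachability in `G − Y` pushes forward to reachability in `G′ − Y`,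
provided `Y` is disjoint from `W`. -/
lemma reach_contract (hf : ∀ v ∈ Z, f v ∈ W) (hYW : Disjoint Y W)
    {u v : V} (h : (removeVerts G Y).Reachable u v) :
    (removeVerts (contractGraph G Z f) Y).Reachable (fStar Z f u) (fStar Z f v) := by
  obtain ⟨p⟩ := h
  induction p with
  | nil => exact .refl _
  | @cons a c b h p ih =>
    obtain ⟨hadj, ha, hc⟩ := h
    refine SimpleGraph.Reachable.trans ?_ ih
    by_cases he : fStar Z f a = fStar Z f c
    · rw [he]
    · exact SimpleGraph.Adj.reachable
        ⟨⟨he, a, c, hadj, rfl, rfl⟩, fStar_not_mem hYW hf ha, fStar_not_mem hYW hf hc⟩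

/-- Reachability in `G′ − X` pulls back to reachability in `G − X`, provided `X` avoids `Z`
and each `v ∈ Z` is connected to `f v` in `G − X`. -/
lemma reach_back (hXZ : Disjoint X Z)
    (hconn : ∀ v ∈ Z, (removeVerts G X).Reachable v (f v))
    {a b : V} (h : (removeVerts (contractGraph G Z f) X).Reachable a b) :
    (removeVerts G X).Reachable a b := by
  obtain ⟨p⟩ := h
  induction p with
  | nil => exact .refl _
  | @cons a c b h p ih =>
    obtain ⟨⟨hne, u, v, huv, ha, hc⟩, haX, hcX⟩ := h
    subst ha; subst hc
    have huX : u ∉ X := by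
      by_cases hu : u ∈ Z
      · exact Set.disjoint_right.mp hXZ hu
      · simpa [fStar, hu] using haX
    have hvX : v ∉ X := by
      by_cases hv : v ∈ Z
      · exact Set.disjoint_right.mp hXZ hv
      · simpa [fStar, hv] using hcX
    have hru : (removeVerts G X).Reachable (fStar Z f u) u := by
      unfold fStar; split
      · exact (hconn u ‹_›).symm
      · exact .refl _
    have hrv : (removeVerts G X).Reachable (fStar Z f v) v := by
      unfold fStar; split
      · exact (hconn v ‹_›).symm
      · exact .refl _
    exact hru.trans (((show (removeVerts G X).Adj u v from ⟨huv, huX, hvX⟩).reachable).trans (hrv.symm.trans ih))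

end Aux

/-- Properties of the contraction operation: it preserves no-instances, and
any solution of the original instance avoiding `Z` that keeps each `v ∈ Z` connected to
`f v` is a solution of the contracted instance. -/
theorem contract_properties
    (G : SimpleGraph V) (Pairs : Set (V × V)) (W : Set V) (k : ℕ)
    (hW : IsMulticut G Pairs W) (Z : Set V) (hZ : Disjoint Z W)
    (f : V → V) (hf : ∀ v ∈ Z, f v ∈ W) :
    ((¬ ∃ X, IsSolution G Pairs W k X) →
      ¬ ∃ X', IsSolution (contractGraph G Z f) (contractPairs Z f Pairs) W k X') ∧
    (∀ X, IsSolution G Pairs W k X → X ∩ Z = ∅ →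
      (∀ v ∈ Z, (removeVerts G X).Reachable v (f v)) →
      IsSolution (contractGraph G Z f) (contractPairs Z f Pairs) W k X) := by
  constructor
  · -- no-instance preservation, by contraposition
    intro hno ⟨X', hX'⟩
    obtain ⟨hcard, hmc, hdisj, hmw⟩ := hX'
    set Y : Set V := X' \ Z with hY
    have hYW : Disjoint Y W := hdisj.mono_left Set.diff_subset
    have hle : removeVerts (contractGraph G Z f) Y ≤ removeVerts (contractGraph G Z f) X' := by
      rintro x y ⟨hxy, hx, hy⟩
      refine ⟨hxy, fun hxX => hx ⟨hxX, contract_adj_not_mem_Z hZ hf hxy⟩,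
        fun hyX => hy ⟨hyX, contract_adj_not_mem_Z hZ hf hxy.symm⟩⟩
    refine hno ⟨Y, le_trans (Set.ncard_le_ncard Set.diff_subset (Set.toFinite X')) hcard,
      ?_, hYW, ?_⟩
    · intro p hp hre
      have := (reach_contract hf hYW hre).mono hle
      exact hmc (fStar Z f p.1, fStar Z f p.2) ⟨p, hp, rfl⟩ this
    · intro w₁ hw₁ w₂ hw₂ hne hre
      have h1 : fStar Z f w₁ = w₁ := by
        simp [fStar, Set.disjoint_right.mp hZ hw₁]
      have h2 : fStar Z f w₂ = w₂ := by
        simp [fStar, Set.disjoint_right.mp hZ hw₂]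
      have := (reach_contract hf hYW hre).mono hle
      rw [h1, h2] at this
      exact hmw w₁ hw₁ w₂ hw₂ hne this
  · -- a good solution of the original instance is a solution of the contracted one
    intro X hX hXZ hconn
    obtain ⟨hcard, hmc, hdisj, hmw⟩ := hX
    have hXZ' : Disjoint X Z := Set.disjoint_iff_inter_eq_empty.mpr hXZ
    have key : ∀ s : V, s ∉ X → (removeVerts G X).Reachable s (fStar Z f s) := by
      intro s hs
      unfold fStar; split
      · exact hconn s ‹_›
      · exact .refl _
    refine ⟨hcard, ?_, hdisj, ?_⟩
    · rintro q ⟨p, hp, rfl⟩ hre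
      have hback := reach_back hXZ' hconn hre
      have hs : (removeVerts G X).Reachable p.1 (fStar Z f p.1) := by
        unfold fStar; split
        · exact hconn p.1 ‹_›
        · exact .refl _
      have ht : (removeVerts G X).Reachable p.2 (fStar Z f p.2) := by
        unfold fStar; split
        · exact hconn p.2 ‹_›
        · exact .refl _
      exact hmc p hp (hs.trans (hback.trans ht.symm))
    · intro w₁ hw₁ w₂ hw₂ hne hre
      exact hmw w₁ hw₁ w₂ hw₂ hne (reach_back hXZ' hconn hre)
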